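/- Let L be a finite-dimensional abelian Lie algebra over a field with basis {x₁, x₂, …, xₙ}, and let h: L × L → L⊗L be a universal Lie pairing. Then L⊗L is the internal direct sum of the submodule L□L and the submodule spanned by {xᵢ⊗xⱼ : 1 ≤ i < j ≤ n}. -/

import Mathlib

universe u v w x

/-- A Lie pairing `ρ : L × L → H` of Lie algebras over a field `F`:
a bilinear map satisfying the three Lie-pairing relations. -/
structure IsLiePairing (F : Type u) [Field F] {L : Type v} {H : Type w}
    [LieRing L] [LieAlgebra F L] [LieRing H] [LieAlgebra F H]
    (ρ : L → L → H) : Prop where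
  add_left : ∀ l l' k : L, ρ (l + l') k = ρ l k + ρ l' k
  add_right : ∀ l k k' : L, ρ l (k + k') = ρ l k + ρ l k'
  smul_left : ∀ (c : F) (l k : L), ρ (c • l) k = c • ρ l k
  smul_right : ∀ (c : F) (l k : L), ρ l (c • k) = c • ρ l k
  bracket_left : ∀ l l' s : L, ρ ⁅l, l'⁆ s = ρ l ⁅l', s⁆ - ρ l' ⁅l, s⁆
  bracket_right : ∀ l s s' : L, ρ l ⁅s, s'⁆ = ρ ⁅s', l⁆ s - ρ ⁅s, l⁆ s'
  bracket_bracket : ∀ l s l' s' : L, ρ ⁅l, s⁆ ⁅l', s'⁆ = -⁅ρ s l, ρ l' s'⁆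

/-- `h : L × L → T` is a universal Lie pairing: `T` plays the role of the
nonabelian tensor square `L ⊗ L`, with `h l l' = l ⊗ l'`. -/
structure IsUniversalLiePairing (F : Type u) [Field F] (L : Type v) (T : Type w)
    [LieRing L] [LieAlgebra F L] [LieRing T] [LieAlgebra F T]
    (h : L → L → T) : Prop where
  isLiePairing : IsLiePairing F h
  universal : ∀ (Q : Type (max u v w)) [LieRing Q] [LieAlgebra F Q]
      (h' : L → L → Q), IsLiePairing F h' →
        ∃! ζ : T →ₗ⁅F⁆ Q, ∀ x y : L, ζ (h x y) = h' x y

/-!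
The span of all `l ⊗ l'` is closed under the bracket, by the third pairing relation, so it is a
Lie subalgebra, and the uniqueness part of the universal property forces it to be everything. By
bilinearity and polarization it is then spanned by `L□L` and the `xᵢ ⊗ xⱼ` with `i < j`.

When `L` is abelian, every bilinear form on `L` is a Lie pairing into the abelian Lie algebra `F`,
hence factors through `L ⊗ L`. The forms `(x, y) ↦ xᵢ yⱼ - xⱼ yᵢ` vanish on `L□L` and are dual to
the `xᵢ ⊗ xⱼ` with `i < j`, which makes the intersection trivial.
-/

open Submodule

namespace IsLiePairing

variable {F : Type*} [Field F] {L H H' : Type*} [LieRing L] [LieAlgebra F L]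
  [LieRing H] [LieAlgebra F H] [LieRing H'] [LieAlgebra F H'] {ρ : L → L → H}

theorem comp (hρ : IsLiePairing F ρ) (f : H →ₗ⁅F⁆ H') :
    IsLiePairing F (fun l l' => f (ρ l l')) where
  add_left l l' k := by simp [hρ.add_left]
  add_right l k k' := by simp [hρ.add_right]
  smul_left c l k := by simp [hρ.smul_left]
  smul_right c l k := by simp [hρ.smul_right]
  bracket_left l l' s := by simp [hρ.bracket_left]
  bracket_right l s s' := by simp [hρ.bracket_right]
  bracket_bracket l s l' s' := by simp [hρ.bracket_bracket]

theorem of_comp_injective (f : H →ₗ⁅F⁆ H') (hf : Function.Injective f)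
    (hρ : IsLiePairing F (fun l l' => f (ρ l l'))) : IsLiePairing F ρ where
  add_left l l' k := hf (by simpa using hρ.add_left l l' k)
  add_right l k k' := hf (by simpa using hρ.add_right l k k')
  smul_left c l k := hf (by simpa using hρ.smul_left c l k)
  smul_right c l k := hf (by simpa using hρ.smul_right c l k)
  bracket_left l l' s := hf (by simpa using hρ.bracket_left l l' s)
  bracket_right l s s' := hf (by simpa using hρ.bracket_right l s s')
  bracket_bracket l s l' s' := hf (by simpa using hρ.bracket_bracket l s l' s')

theorem of_isLieAbelian [IsLieAbelian L] [IsLieAbelian H] (B : L →ₗ[F] L →ₗ[F] H) :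
    IsLiePairing F (fun l l' => B l l') where
  add_left l l' k := by simp
  add_right l k k' := by simp
  smul_left c l k := by simp
  smul_right c l k := by simp
  bracket_left l l' s := by simp [trivial_lie_zero]
  bracket_right l s s' := by simp [trivial_lie_zero]
  bracket_bracket l s l' s' := by simp [trivial_lie_zero]

def toLinearMap₂ (hρ : IsLiePairing F ρ) : L →ₗ[F] L →ₗ[F] H :=
  LinearMap.mk₂ F ρ hρ.add_left hρ.smul_left hρ.add_right hρ.smul_right

theorem lie_mem_span (hρ : IsLiePairing F ρ) {y z : H}
    (hy : y ∈ span F {z | ∃ l l', z = ρ l l'}) (hz : z ∈ span F {z | ∃ l l', z = ρ l l'}) :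
    ⁅y, z⁆ ∈ span F {z | ∃ l l', z = ρ l l'} := by
  have hlie := apply_mem_map₂ (LieModule.toEnd F H H : H →ₗ[F] Module.End F H) hy hz
  rw [map₂_span_span] at hlie
  refine span_le.2 ?_ hlie
  rintro _ ⟨_, ⟨a, c, rfl⟩, _, ⟨a', c', rfl⟩, rfl⟩
  have hbr : ⁅ρ a c, ρ a' c'⁆ = -ρ ⁅c, a⁆ ⁅a', c'⁆ := by
    rw [hρ.bracket_bracket, neg_neg]
  change ⁅ρ a c, ρ a' c'⁆ ∈ span F _
  exact hbr ▸ neg_mem (subset_span ⟨_, _, rfl⟩)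

end IsLiePairing

namespace IsUniversalLiePairing

variable {F : Type u} [Field F] {L : Type v} {T : Type w} [LieRing L] [LieAlgebra F L]
  [LieRing T] [LieAlgebra F T] {h : L → L → T}

/-- The universal property only quantifies over Lie algebras in `Type (max u v w)`; this transfers
it to any Lie algebra in bijection with such a type (for instance via `ULift`). -/
theorem existsUnique_of_equiv (hh : IsUniversalLiePairing F L T h) {Q : Type x} [LieRing Q]
    [LieAlgebra F Q] {Q' : Type (max u v w)} (e : Q' ≃ Q) {h' : L → L → Q}
    (hh' : IsLiePairing F h') : ∃! ζ : T →ₗ⁅F⁆ Q, ∀ x y, ζ (h x y) = h' x y := by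
  let _ := e.lieRing
  let _ := e.lieAlgebra F
  let E : Q' ≃ₗ⁅F⁆ Q := e.lieEquiv F
  obtain ⟨ζ, hζ, huniq⟩ := hh.universal Q' _ (hh'.comp E.symm.toLieHom)
  refine ⟨E.toLieHom.comp ζ, fun x y => by simp [hζ], fun ζ' hζ' => ?_⟩
  have hcomp : E.symm.toLieHom.comp ζ' = ζ := huniq _ fun x y => by simp [hζ']
  ext t
  simpa using congrArg E (LieHom.congr_fun hcomp t)

theorem span_eq_top (hh : IsUniversalLiePairing F L T h) :
    span F {z | ∃ x y, z = h x y} = ⊤ := by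
  let K : LieSubalgebra F T :=
    { toSubmodule := span F {z | ∃ x y, z = h x y}
      lie_mem' := hh.isLiePairing.lie_mem_span }
  have hK : ∀ x y, h x y ∈ K := fun x y => subset_span ⟨x, y, rfl⟩
  let hK' : L → L → K := fun x y => ⟨h x y, hK x y⟩
  have hpK : IsLiePairing F hK' :=
    .of_comp_injective K.incl Subtype.val_injective hh.isLiePairing
  obtain ⟨ζ, hζ, -⟩ := hh.existsUnique_of_equiv (Equiv.ulift.{max u v w} (α := K)) hpK
  have hid : K.incl.comp ζ = LieHom.id :=
    (hh.existsUnique_of_equiv (Equiv.ulift.{max u v w} (α := T)) hh.isLiePairing).unique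
      (fun x y => by simp [hζ, hK']) (fun x y => rfl)
  refine eq_top_iff.2 fun t _ => ?_
  have ht : ((ζ t : K) : T) = t := LieHom.congr_fun hid t
  exact ht ▸ (ζ t).2

theorem exists_linearMap_apply_eq [IsLieAbelian L] (hh : IsUniversalLiePairing F L T h)
    (B : L →ₗ[F] L →ₗ[F] F) : ∃ φ : T →ₗ[F] F, ∀ x y, φ (h x y) = B x y := by
  let _ : LieRing F := LieRing.ofAssociativeRing
  have : IsLieAbelian F := isMulCommutative_iff_isLieAbelian.mp inferInstance
  obtain ⟨ζ, hζ, -⟩ :=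
    hh.existsUnique_of_equiv (Equiv.ulift.{max u v w} (α := F)) (.of_isLieAbelian B)
  exact ⟨ζ, hζ⟩

end IsUniversalLiePairing

theorem Submodule.disjoint_span_range_of_dual {R N κ : Type*} [CommRing R] [AddCommGroup N]
    [Module R N] [DecidableEq κ] {P : Submodule R N} {v : κ → N} (φ : κ → N →ₗ[R] R)
    (hP : ∀ i, P ≤ LinearMap.ker (φ i)) (hv : ∀ i j, φ i (v j) = if i = j then 1 else 0) :
    Disjoint P (span R (Set.range v)) := by
  rw [Submodule.disjoint_def]
  intro z hzP hzv
  obtain ⟨c, rfl⟩ := Finsupp.mem_span_range_iff_exists_finsupp.1 hzv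
  have hc : ∀ i, c i = 0 := fun i => by
    simpa [map_finsuppSum, hv] using hP i hzP
  rw [show c = 0 from Finsupp.ext hc, Finsupp.sum_zero_index]

namespace Module.Basis

variable {R M N ι : Type*} [CommRing R] [AddCommGroup M] [Module R M] [AddCommGroup N]
  [Module R N] (b : Basis ι R M)

noncomputable def coordWedge (i j : ι) : M →ₗ[R] M →ₗ[R] R :=
  (b.coord i).smulRight (b.coord j) - (b.coord j).smulRight (b.coord i)

theorem coordWedge_apply_self (i j : ι) (x : M) : b.coordWedge i j x x = 0 := by
  simp [coordWedge, mul_comm]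

theorem coordWedge_apply_basis [LinearOrder ι] {i j k l : ι} (hij : i < j) (hkl : k < l) :
    b.coordWedge i j (b k) (b l) = if i = k ∧ j = l then 1 else 0 := by
  simp only [coordWedge, LinearMap.sub_apply, LinearMap.smulRight_apply, coord_apply, repr_self,
    Finsupp.single_apply]
  have : ¬(j = k ∧ i = l) := fun ⟨hjk, hil⟩ => lt_asymm hij (hjk ▸ hil ▸ hkl)
  split_ifs <;> subst_vars <;> simp_all [eq_comm]

theorem disjoint_span_diag_span_apply_lt [LinearOrder ι] (B : M →ₗ[R] M →ₗ[R] N)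
    (φ : ι → ι → N →ₗ[R] R) (hφ : ∀ i j x y, φ i j (B x y) = b.coordWedge i j x y) :
    Disjoint (span R {z | ∃ l, z = B l l}) (span R {z | ∃ i j, i < j ∧ z = B (b i) (b j)}) := by
  classical
  let v : {p : ι × ι // p.1 < p.2} → N := fun p => B (b p.1.1) (b p.1.2)
  have hv : {z | ∃ i j, i < j ∧ z = B (b i) (b j)} = Set.range v := by
    ext z
    constructor
    · rintro ⟨i, j, hij, rfl⟩
      exact ⟨⟨(i, j), hij⟩, rfl⟩
    · rintro ⟨⟨⟨i, j⟩, hij⟩, rfl⟩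
      exact ⟨i, j, hij, rfl⟩
  rw [hv]
  refine disjoint_span_range_of_dual (fun p => φ p.1.1 p.1.2) (fun p => span_le.2 ?_) ?_
  · rintro _ ⟨l, rfl⟩
    simp [hφ, coordWedge_apply_self]
  · rintro ⟨⟨i, j⟩, hij⟩ ⟨⟨k, l⟩, hkl⟩
    simp [v, hφ, b.coordWedge_apply_basis hij hkl]

theorem apply_mem_span_diag_sup_span_apply_lt [LinearOrder ι] (B : M →ₗ[R] M →ₗ[R] N)
    (x y : M) :
    B x y ∈ span R {z | ∃ l, z = B l l} ⊔ span R {z | ∃ i j, i < j ∧ z = B (b i) (b j)} := by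
  set P := span R {z | ∃ l, z = B l l} ⊔ span R {z | ∃ i j, i < j ∧ z = B (b i) (b j)}
  have hdiag : ∀ l, B l l ∈ P := fun l => mem_sup_left (subset_span ⟨l, rfl⟩)
  have hlt : ∀ {i j}, i < j → B (b i) (b j) ∈ P := fun hij =>
    mem_sup_right (subset_span ⟨_, _, hij, rfl⟩)
  have hbasis : ∀ i j, B (b i) (b j) ∈ P := by
    intro i j
    rcases lt_trichotomy i j with hij | rfl | hji
    · exact hlt hij
    · exact hdiag _
    · have hpolar : B (b i) (b j) =
          B (b i + b j) (b i + b j) - B (b i) (b i) - B (b j) (b j) - B (b j) (b i) := by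
        simp only [map_add, LinearMap.add_apply]
        abel
      rw [hpolar]
      exact sub_mem (sub_mem (sub_mem (hdiag _) (hdiag _)) (hdiag _)) (hlt hji)
  have hB : B.compr₂ P.mkQ = 0 :=
    LinearMap.ext_basis b b fun i j => by simpa using hbasis i j
  simpa using LinearMap.congr_fun₂ hB x y

end Module.Basis

/-- If `L` is a finite-dimensional abelian Lie algebra with basis
`x₁, …, xₙ`, then the tensor square `L⊗L` is the internal direct sum of the
submodule `L□L` (spanned by the `l⊗l`) and the submodule spanned by the
`xᵢ⊗xⱼ` with `i < j`. -/
theorem tensorSquare_abelian_direct_sum (F : Type u) [Field F]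
    (L : Type v) (T : Type w) [LieRing L] [LieAlgebra F L]
    [LieRing T] [LieAlgebra F T]
    (h : L → L → T) (hh : IsUniversalLiePairing F L T h)
    (hab : IsLieAbelian L) (n : ℕ) (b : Module.Basis (Fin n) F L) :
    Submodule.span F {z : T | ∃ l : L, z = h l l} ⊓
        Submodule.span F {z : T | ∃ i j : Fin n, i < j ∧ z = h (b i) (b j)} = ⊥ ∧
      Submodule.span F {z : T | ∃ l : L, z = h l l} ⊔
        Submodule.span F {z : T | ∃ i j : Fin n, i < j ∧ z = h (b i) (b j)} = ⊤ := by
  let B := hh.isLiePairing.toLinearMap₂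
  choose φ hφ using fun i j => hh.exists_linearMap_apply_eq (b.coordWedge i j)
  refine ⟨disjoint_iff.1 (b.disjoint_span_diag_span_apply_lt B φ hφ), top_le_iff.1 ?_⟩
  rw [← hh.span_eq_top, span_le]
  rintro _ ⟨x, y, rfl⟩
  exact b.apply_mem_span_diag_sup_span_apply_lt B x y
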